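/- Let σ₀, τ₀ ∈ ℂ with σ₀τ₀ ≠ 0 and Re(σ₀τ₀) = −|σ₀||τ₀|. Then there exists a₀ > 0 such that for every real a with 0 < |a| < a₀ and every b ∈ [1/2, 3/2], the number ρ = |σ₀|/|τ₀| is the unique positive solution of |F₊(ρ)| = 1 and also the unique positive solution of |F₋(ρ)| = 1, where G(ρ) = a(1−ρ²)/(2ρ√(ρ+b(1+ρ²))) and F±(ρ) = (G(ρ) ± √(G(ρ)² + σ₀τ₀/ρ))/τ₀ with the principal complex square root. -/

import Mathlib

open Complex

/-- `G(ρ) = a(1−ρ²)/(2ρ√(ρ+b(1+ρ²)))`, viewed as a complex number. -/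
noncomputable def Gfun (a b ρ : ℝ) : ℂ :=
  ((a * (1 - ρ ^ 2) / (2 * ρ * Real.sqrt (ρ + b * (1 + ρ ^ 2))) : ℝ) : ℂ)

/-- `F₊(ρ) = (G(ρ) + √(G(ρ)² + σ₀τ₀/ρ))/τ₀` with the principal complex square root. -/
noncomputable def Fplus (σ₀ τ₀ : ℂ) (a b ρ : ℝ) : ℂ :=
  (Gfun a b ρ + (Gfun a b ρ ^ 2 + σ₀ * τ₀ / (ρ : ℂ)) ^ ((1 : ℂ) / 2)) / τ₀

/-- `F₋(ρ) = (G(ρ) − √(G(ρ)² + σ₀τ₀/ρ))/τ₀` with the principal complex square root. -/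
noncomputable def Fminus (σ₀ τ₀ : ℂ) (a b ρ : ℝ) : ℂ :=
  (Gfun a b ρ - (Gfun a b ρ ^ 2 + σ₀ * τ₀ / (ρ : ℂ)) ^ ((1 : ℂ) / 2)) / τ₀

private lemma cpow_half_neg {x : ℝ} (hx : x < 0) :
    (x : ℂ) ^ ((1 : ℂ) / 2) = (Real.sqrt (-x) : ℂ) * I := by
  have hexp : Complex.exp ((Real.pi : ℂ) * I * ((1 : ℂ) / 2)) = I := by
    have h : (Real.pi : ℂ) * I * ((1 : ℂ) / 2) = ((Real.pi / 2 : ℝ) : ℂ) * I := by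
      push_cast; ring
    rw [h, Complex.exp_mul_I, ← Complex.ofReal_cos, ← Complex.ofReal_sin,
      Real.cos_pi_div_two, Real.sin_pi_div_two]
    simp
  have h2 : (-(x : ℂ)) ^ ((1 : ℂ) / 2) = (Real.sqrt (-x) : ℂ) := by
    rw [show ((1 : ℂ) / 2) = ((1 / 2 : ℝ) : ℂ) by norm_num,
      show (-(x : ℂ)) = (((-x : ℝ)) : ℂ) by push_cast; ring,
      ← Complex.ofReal_cpow (by linarith) (1 / 2 : ℝ), ← Real.sqrt_eq_rpow]
  rw [Complex.ofReal_cpow_of_nonpos hx.le, hexp, h2]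

set_option maxHeartbeats 1000000 in
private lemma key (σ₀ τ₀ : ℂ) (hσ : σ₀ ≠ 0) (hτ : τ₀ ≠ 0)
    (hst : σ₀ * τ₀ = -((‖σ₀‖ * ‖τ₀‖ : ℝ) : ℂ))
    (a b : ℝ) (ha : |a| < min (‖σ₀‖) (‖τ₀‖) / 2)
    (hb : b ∈ Set.Icc (1 / 2 : ℝ) (3 / 2)) (e : ℂ) (he : e = 1 ∨ e = -1)
    (ρ : ℝ) (hρ : 0 < ρ) :
    ‖(Gfun a b ρ + e * (Gfun a b ρ ^ 2 + σ₀ * τ₀ / (ρ : ℂ)) ^ ((1 : ℂ) / 2)) / τ₀‖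
      = 1 ↔ ρ = ‖σ₀‖ / ‖τ₀‖ := by
  set S := ‖σ₀‖ with hS
  set T := ‖τ₀‖ with hT
  have hS0 : 0 < S := norm_pos_iff.mpr hσ
  have hT0 : 0 < T := norm_pos_iff.mpr hτ
  set s : ℝ := S * T with hsdef
  have hs0 : 0 < s := mul_pos hS0 hT0
  set g : ℝ := a * (1 - ρ ^ 2) / (2 * ρ * Real.sqrt (ρ + b * (1 + ρ ^ 2))) with hgdef
  have hG : Gfun a b ρ = (g : ℂ) := rfl
  set x : ℝ := g ^ 2 - s / ρ with hxdef
  have hx : Gfun a b ρ ^ 2 + σ₀ * τ₀ / (ρ : ℂ) = (x : ℂ) := by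
    rw [hG, hst, hxdef]
    have : (ρ : ℂ) ≠ 0 := by exact_mod_cast hρ.ne'
    push_cast
    field_simp
    ring
  obtain ⟨hb1, hb2⟩ := hb
  set D := Real.sqrt (ρ + b * (1 + ρ ^ 2)) with hDdef
  have hDarg : (0 : ℝ) < ρ + b * (1 + ρ ^ 2) := by nlinarith
  have hD0 : 0 < D := Real.sqrt_pos.mpr hDarg
  have hDsq : D ^ 2 = ρ + b * (1 + ρ ^ 2) := Real.sq_sqrt hDarg.le
  have hgabs : |g| = |a| * |1 - ρ ^ 2| / (2 * ρ * D) := by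
    rw [hgdef, abs_div, _root_.abs_mul, abs_of_pos (show (0:ℝ) < 2 * ρ * D by positivity)]
  have hg1 : ρ ≤ 1 → |g| ≤ |a| / ρ := by
    intro h1
    have hD12 : (1 : ℝ) / 2 ≤ D := by
      rw [hDdef, Real.le_sqrt (by norm_num) hDarg.le]
      nlinarith
    rw [hgabs, div_le_div_iff₀ (by positivity) hρ]
    have h2 : |1 - ρ ^ 2| ≤ 1 := by rw [abs_le]; constructor <;> nlinarith
    calc |a| * |1 - ρ ^ 2| * ρ ≤ |a| * 1 * ρ := by gcongr
      _ = |a| * (2 * ρ * (1 / 2)) := by ring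
      _ ≤ |a| * (2 * ρ * D) := by gcongr
  have hg2 : 1 ≤ ρ → |g| ≤ |a| := by
    intro h1
    have hD12 : ρ / 2 ≤ D := by
      rw [hDdef, Real.le_sqrt (by positivity) hDarg.le]
      nlinarith
    rw [hgabs, div_le_iff₀ (by positivity)]
    have h2 : |1 - ρ ^ 2| ≤ ρ ^ 2 := by rw [abs_le]; constructor <;> nlinarith
    calc |a| * |1 - ρ ^ 2| ≤ |a| * ρ ^ 2 := by gcongr
      _ = |a| * (2 * ρ * (ρ / 2)) := by ring
      _ ≤ |a| * (2 * ρ * D) := by gcongr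
  have haS : 2 * |a| < S := by
    have h := min_le_left S T
    linarith
  have haT : 2 * |a| < T := by
    have h := min_le_right S T
    linarith
  rcases lt_or_ge x 0 with hneg | hpos
  · -- square root purely imaginary: |F| = √(s/ρ)/T
    have habs : ‖Gfun a b ρ + e * (x : ℂ) ^ ((1 : ℂ) / 2)‖
        = Real.sqrt (s / ρ) := by
      rw [cpow_half_neg hneg, hG]
      have hsx : Real.sqrt (-x) ^ 2 = -x := Real.sq_sqrt (by linarith)
      rcases he with rfl | rfl
      · rw [one_mul, Complex.norm_add_mul_I]
        congr 1
        rw [hsx, hxdef]; ring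
      · rw [show (g : ℂ) + -1 * ((Real.sqrt (-x) : ℂ) * I)
            = (g : ℂ) + ((-Real.sqrt (-x) : ℝ) : ℂ) * I by push_cast; ring,
          Complex.norm_add_mul_I]
        congr 1
        have h9 : (-Real.sqrt (-x)) ^ 2 = -x := by rw [neg_pow, hsx]; ring
        rw [h9, hxdef]; ring
    rw [hx, norm_div, habs, div_eq_one_iff_eq hT0.ne']
    constructor
    · intro h
      have h2 : s / ρ = T ^ 2 := by
        rw [← h, Real.sq_sqrt (by positivity)]
      have h3 : s = T ^ 2 * ρ := by
        field_simp at h2; linarith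
      rw [eq_div_iff hT0.ne']
      nlinarith [hT0]
    · intro h
      subst h
      rw [show s / (S / T) = T ^ 2 by rw [hsdef]; field_simp]
      exact Real.sqrt_sq hT0.le
  · -- real case: no solutions at all
    have hsq : (x : ℂ) ^ ((1 : ℂ) / 2) = ((Real.sqrt x : ℝ) : ℂ) := by
      rw [show ((1 : ℂ) / 2) = ((1 / 2 : ℝ) : ℂ) by norm_num,
        ← Complex.ofReal_cpow hpos, ← Real.sqrt_eq_rpow]
    set r := Real.sqrt x with hrdef
    have hr0 : 0 ≤ r := Real.sqrt_nonneg x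
    have hr2 : r ^ 2 = x := Real.sq_sqrt hpos
    obtain ⟨e', he', hva⟩ : ∃ e' : ℝ, (e' = 1 ∨ e' = -1) ∧
        ‖Gfun a b ρ + e * (x : ℂ) ^ ((1 : ℂ) / 2)‖ = |g + e' * r| := by
      rcases he with rfl | rfl
      · refine ⟨1, Or.inl rfl, ?_⟩
        rw [hsq, hG, show (g : ℂ) + 1 * ((r : ℝ) : ℂ) = ((g + 1 * r : ℝ) : ℂ) by push_cast; ring,
          Complex.norm_real, Real.norm_eq_abs]
      · refine ⟨-1, Or.inr rfl, ?_⟩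
        rw [hsq, hG,
          show (g : ℂ) + (-1) * ((r : ℝ) : ℂ) = ((g + (-1) * r : ℝ) : ℂ) by push_cast; ring,
          Complex.norm_real, Real.norm_eq_abs]
    have he'abs : |e'| = 1 := by rcases he' with rfl | rfl <;> norm_num
    have hgr : r ≤ |g| := by
      have h1 : r ^ 2 ≤ g ^ 2 := by
        rw [hr2, hxdef]
        nlinarith [div_pos hs0 hρ]
      nlinarith [_root_.sq_abs g, _root_.abs_nonneg g, hr0]
    have hlow : |g| - r ≤ |g + e' * r| := by
      have h1 : |g| ≤ |g + e' * r| + r := by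
        calc |g| = |(g + e' * r) + (-e') * r| := by congr 1; ring
          _ ≤ |g + e' * r| + |(-e') * r| := abs_add_le _ _
          _ = |g + e' * r| + r := by rw [_root_.abs_mul, _root_.abs_neg, he'abs, one_mul, _root_.abs_of_nonneg hr0]
      linarith
    have hhigh : |g + e' * r| ≤ |g| + r := by
      calc |g + e' * r| ≤ |g| + |e' * r| := abs_add_le _ _
        _ = |g| + r := by rw [_root_.abs_mul, he'abs, one_mul, _root_.abs_of_nonneg hr0]
    have hprod : (|g| - r) * (|g| + r) = s / ρ := by
      have h1 : (|g| - r) * (|g| + r) = g ^ 2 - r ^ 2 := by rw [← _root_.sq_abs g]; ring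
      rw [h1, hr2, hxdef]; ring
    have hρne : ρ ≠ S / T := by
      intro hEq
      have hsρ : s / ρ = T ^ 2 := by
        rw [hEq, hsdef]; field_simp
      have hglt : |g| < T / 2 := by
        rcases le_total ρ 1 with h1 | h1
        · have h2 := hg1 h1
          have h3 : |a| / ρ < T / 2 := by
            rw [hEq, div_lt_iff₀ (by positivity)]
            have h4 : T / 2 * (S / T) = S / 2 := by field_simp
            rw [h4]; linarith
          linarith
        · have h2 := hg2 h1
          linarith
      have hg2lt : g ^ 2 < T ^ 2 / 4 := by
        nlinarith [_root_.sq_abs g, _root_.abs_nonneg g]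
      have : x < 0 := by
        rw [hxdef, hsρ]; nlinarith [hT0]
      linarith
    rw [hx, norm_div, hva]
    constructor
    · intro hone
      exfalso
      have hvT : |g + e' * r| = T := (div_eq_one_iff_eq hT0.ne').mp hone
      rcases le_total ρ 1 with h1 | h1
      · have hub := hg1 h1
        have hgpos : 0 < |g| := by
          nlinarith [hprod, div_pos hs0 hρ, hr0, _root_.abs_nonneg g]
        have hlT : |g| - r ≤ T := by rw [← hvT]; exact hlow
        have h5 : s / ρ ≤ (2 * T * |a|) / ρ := by
          calc s / ρ = (|g| - r) * (|g| + r) := hprod.symm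
            _ ≤ T * (|g| + r) := by nlinarith [_root_.abs_nonneg g, hr0, hgr]
            _ ≤ T * (2 * (|a| / ρ)) := by nlinarith [hT0, hgr]
            _ = (2 * T * |a|) / ρ := by ring
        have h6 : s ≤ 2 * T * |a| := (div_le_div_iff_of_pos_right hρ).mp h5
        nlinarith [hT0]
      · have h2 := hg2 h1
        have h3 : |g + e' * r| ≤ 2 * |a| := by linarith [hhigh, hgr]
        linarith
    · intro h
      exact absurd h hρne

/-- Case 2 of Proposition 3.2: if `Re(σ₀τ₀) = −|σ₀||τ₀|`, then for all small enough
nonzero `a` and `b ∈ [1/2, 3/2]`, `ρ = |σ₀|/|τ₀|` is the unique positive solution of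
`|F₊(ρ)| = 1`, and also of `|F₋(ρ)| = 1`. -/
theorem unique_rho_case2 (σ₀ τ₀ : ℂ) (h0 : σ₀ * τ₀ ≠ 0)
    (hre : (σ₀ * τ₀).re = -(‖σ₀‖ * ‖τ₀‖)) :
    ∃ a₀ : ℝ, 0 < a₀ ∧ ∀ a : ℝ, 0 < |a| → |a| < a₀ →
      ∀ b : ℝ, b ∈ Set.Icc (1 / 2 : ℝ) (3 / 2) →
        (‖Fplus σ₀ τ₀ a b (‖σ₀‖ / ‖τ₀‖)‖ = 1 ∧
          ∀ ρ : ℝ, 0 < ρ → ‖Fplus σ₀ τ₀ a b ρ‖ = 1 →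
            ρ = ‖σ₀‖ / ‖τ₀‖) ∧
        (‖Fminus σ₀ τ₀ a b (‖σ₀‖ / ‖τ₀‖)‖ = 1 ∧
          ∀ ρ : ℝ, 0 < ρ → ‖Fminus σ₀ τ₀ a b ρ‖ = 1 →
            ρ = ‖σ₀‖ / ‖τ₀‖) := by
  have hσ : σ₀ ≠ 0 := fun h => h0 (by simp [h])
  have hτ : τ₀ ≠ 0 := fun h => h0 (by simp [h])
  have hS0 : 0 < ‖σ₀‖ := norm_pos_iff.mpr hσ
  have hT0 : 0 < ‖τ₀‖ := norm_pos_iff.mpr hτ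
  have him : (σ₀ * τ₀).im = 0 := by
    have h1 : ‖σ₀ * τ₀‖ = ‖σ₀‖ * ‖τ₀‖ := norm_mul _ _
    have h2 : (‖σ₀ * τ₀‖) ^ 2 = (σ₀ * τ₀).re ^ 2 + (σ₀ * τ₀).im ^ 2 := by
      rw [Complex.sq_norm, Complex.normSq_apply]; ring
    have h4 : (σ₀ * τ₀).re ^ 2 = ‖σ₀ * τ₀‖ ^ 2 := by rw [h1, hre]; ring
    have h3 : (σ₀ * τ₀).im ^ 2 = 0 := by linarith
    exact pow_eq_zero_iff (by norm_num) |>.mp h3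
  have hst : σ₀ * τ₀ = -((‖σ₀‖ * ‖τ₀‖ : ℝ) : ℂ) := by
    apply Complex.ext
    · simp [hre]
    · simp [him]
  refine ⟨min (‖σ₀‖) (‖τ₀‖) / 2, by positivity, ?_⟩
  intro a _ ha b hb
  have hρs : 0 < ‖σ₀‖ / ‖τ₀‖ := by positivity
  have hFp : ∀ ρ : ℝ, Fplus σ₀ τ₀ a b ρ
      = (Gfun a b ρ + (1 : ℂ) * (Gfun a b ρ ^ 2 + σ₀ * τ₀ / (ρ : ℂ)) ^ ((1 : ℂ) / 2)) / τ₀ := by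
    intro ρ; rw [Fplus, one_mul]
  have hFm : ∀ ρ : ℝ, Fminus σ₀ τ₀ a b ρ
      = (Gfun a b ρ + (-1 : ℂ) * (Gfun a b ρ ^ 2 + σ₀ * τ₀ / (ρ : ℂ)) ^ ((1 : ℂ) / 2)) / τ₀ := by
    intro ρ; rw [Fminus, neg_one_mul, ← sub_eq_add_neg]
  refine ⟨⟨?_, ?_⟩, ?_, ?_⟩
  · rw [hFp]
    exact (key σ₀ τ₀ hσ hτ hst a b ha hb 1 (Or.inl rfl) _ hρs).mpr rfl
  · intro ρ hρ h1
    rw [hFp] at h1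
    exact (key σ₀ τ₀ hσ hτ hst a b ha hb 1 (Or.inl rfl) ρ hρ).mp h1
  · rw [hFm]
    exact (key σ₀ τ₀ hσ hτ hst a b ha hb (-1) (Or.inr rfl) _ hρs).mpr rfl
  · intro ρ hρ h1
    rw [hFm] at h1
    exact (key σ₀ τ₀ hσ hτ hst a b ha hb (-1) (Or.inr rfl) ρ hρ).mp h1
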